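/- In the polylogarithmic Lie algebra L^PL, for each natural number n the triple of elements {(ad e1)^n(e11), (ad e2)^n(e22), (ad e1)^n(e12)} is linearly independent over ℚ: if a·(ad e1)^n(e11) + b·(ad e2)^n(e22) + c·(ad e1)^n(e12) = 0 with a, b, c ∈ ℚ, then a = b = c = 0. -/

import Mathlib

inductive Gamma : Type
  | e1 | e11 | e2 | e22 | e12
deriving DecidableEq

noncomputable section

abbrev FL : Type := FreeLieAlgebra ℚ Gamma

/-- The five generators of the free Lie algebra. -/
def gen (x : Gamma) : FL := FreeLieAlgebra.of ℚ x

/-- The defining relations of the Lie algebra `L`. -/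
def relSet : Set FL :=
  {⁅gen .e1, gen .e2⁆, ⁅gen .e11, gen .e2⁆, ⁅gen .e1, gen .e22⁆,
   ⁅gen .e11, gen .e22⁆ - ⁅gen .e2 - gen .e1, gen .e12⁆,
   (-⁅gen .e11, gen .e12⁆) - ⁅gen .e2 - gen .e1, gen .e12⁆,
   ⁅gen .e22, gen .e12⁆ - ⁅gen .e2 - gen .e1, gen .e12⁆}

/-- The Lie ideal generated by the relations. -/
def relIdeal : LieIdeal ℚ FL := LieSubmodule.lieSpan ℚ FL relSet

/-- The Lie algebra `L`. -/
abbrev Lquot : Type := FL ⧸ relIdeal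

/-- Projection `L(Γ) → L`. -/
def mkL : FL → Lquot := LieSubmodule.Quotient.mk (N := relIdeal)

/-- The Lie ideal `N` of `L` generated by `e11`, `e22`, `e12`. -/
def NIdeal : LieIdeal ℚ Lquot :=
  LieSubmodule.lieSpan ℚ Lquot {mkL (gen .e11), mkL (gen .e22), mkL (gen .e12)}

/-- The Lie ideal `[N, N]`. -/
def NN : LieIdeal ℚ Lquot := ⁅NIdeal, NIdeal⁆

/-- The polylogarithmic Lie algebra `L^PL = L/[N,N]`. -/
abbrev LPL : Type := Lquot ⧸ NN

/-- Projection `L(Γ) → L^PL`. -/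
def pl (x : FL) : LPL := LieSubmodule.Quotient.mk (N := NN) (mkL x)

def E1 : LPL := pl (gen .e1)
def E11 : LPL := pl (gen .e11)
def E2 : LPL := pl (gen .e2)
def E22 : LPL := pl (gen .e22)
def E12 : LPL := pl (gen .e12)

/-- The adjoint action `ad z : w ↦ ⁅z, w⁆` as a linear endomorphism of `L^PL`. -/
def adPL (z : LPL) : Module.End ℚ LPL := LieAlgebra.ad ℚ LPL z

end
attribute [local instance] LieRing.ofAssociativeRing

noncomputable section
open Polynomial

abbrev Mo : Type := Polynomial ℚ × Polynomial ℚ × Polynomial ℚ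
abbrev V : Type := Mo × ℚ

def mulOp (p q r : Polynomial ℚ) : Module.End ℚ V where
  toFun v := ((p * v.1.1, q * v.1.2.1, r * v.1.2.2), 0)
  map_add' v w := by simp [Prod.ext_iff, mul_add]
  map_smul' t v := by simp [Prod.ext_iff, Polynomial.smul_eq_C_mul]; ring_nf; tauto

def scOp (m : Mo) : Module.End ℚ V where
  toFun v := (v.2 • m, 0)
  map_add' v w := by simp [Prod.ext_iff, add_smul]
  map_smul' t v := by simp [Prod.ext_iff, mul_smul]

lemma lie_mulOp_scOp (p q r : Polynomial ℚ) (m : Mo) :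
    ⁅mulOp p q r, scOp m⁆ = scOp (p * m.1, q * m.2.1, r * m.2.2) := by
  refine LinearMap.ext fun v => ?_
  simp [Ring.lie_def, mulOp, scOp, Prod.ext_iff, mul_smul_comm]

lemma lie_mulOp_mulOp (p q r p' q' r' : Polynomial ℚ) :
    ⁅mulOp p q r, mulOp p' q' r'⁆ = 0 := by
  refine LinearMap.ext fun v => ?_
  simp [Ring.lie_def, mulOp, Prod.ext_iff] ; ring_nf; tauto

lemma lie_scOp_scOp (m m' : Mo) : ⁅scOp m, scOp m'⁆ = 0 := by
  refine LinearMap.ext fun v => ?_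
  simp [Ring.lie_def, scOp, Prod.ext_iff]

lemma scOp_apply_zero (m : Mo) (x : Mo) : scOp m (x, 0) = 0 := by
  simp [scOp, Prod.ext_iff]

/-- endomorphisms whose output has zero scalar component -/
def UU : LieSubalgebra ℚ (Module.End ℚ V) where
  carrier := {T | ∀ v : V, (T v).2 = 0}
  add_mem' := fun {T} {S} hT hS v => by simp [hT v, hS v]
  zero_mem' := fun v => rfl
  smul_mem' := fun c T hT v => by simp [hT v]
  lie_mem' := fun {T} {S} hT hS v => by
    have hT' : ∀ w, (T w).2 = 0 := hT
    have hS' : ∀ w, (S w).2 = 0 := hS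
    simp [Ring.lie_def, hT', hS']

lemma mulOp_mem (p q r : Polynomial ℚ) : mulOp p q r ∈ UU := fun v => rfl
lemma scOp_mem (m : Mo) : scOp m ∈ UU := fun v => rfl

def fA : Gamma → UU
  | .e1 => ⟨mulOp X 0 X, mulOp_mem _ _ _⟩
  | .e2 => ⟨mulOp 0 X X, mulOp_mem _ _ _⟩
  | .e11 => ⟨scOp (1, 0, 0), scOp_mem _⟩
  | .e22 => ⟨scOp (0, 1, 0), scOp_mem _⟩
  | .e12 => ⟨scOp (0, 0, 1), scOp_mem _⟩

def f : FL →ₗ⁅ℚ⁆ UU := FreeLieAlgebra.lift ℚ fA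

lemma f_gen (x : Gamma) : f (gen x) = fA x := FreeLieAlgebra.lift_of_apply fA x

lemma lie_scOp_mulOp (m : Mo) (p q r : Polynomial ℚ) :
    ⁅scOp m, mulOp p q r⁆ = - scOp (p * m.1, q * m.2.1, r * m.2.2) := by
  rw [← lie_skew, lie_mulOp_scOp]

lemma scOp_zero' : scOp 0 = 0 := by
  refine LinearMap.ext fun v => ?_
  simp [scOp, Prod.ext_iff]

lemma scOp_zero : scOp (0, 0, 0) = 0 := by
  refine LinearMap.ext fun v => ?_
  simp [scOp, Prod.ext_iff]

lemma relIdeal_le_ker : relIdeal ≤ f.ker := by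
  rw [relIdeal, LieSubmodule.lieSpan_le]
  intro x hx
  simp only [relSet, Set.mem_insert_iff, Set.mem_singleton_iff] at hx
  rw [SetLike.mem_coe, LieHom.mem_ker]
  rcases hx with rfl|rfl|rfl|rfl|rfl|rfl <;>
    apply Subtype.coe_injective <;>
    simp [LieHom.map_lie, map_sub, map_neg, f_gen, fA,
      LieSubalgebra.coe_bracket, sub_lie, neg_lie,
      lie_mulOp_scOp, lie_mulOp_mulOp, lie_scOp_scOp, lie_scOp_mulOp, scOp_zero, scOp_zero']

lemma hker' : (relIdeal : Submodule ℚ FL) ≤ LinearMap.ker (f : FL →ₗ[ℚ] UU) := by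
  intro x hx
  rw [LinearMap.mem_ker]
  exact LieHom.mem_ker.mp (relIdeal_le_ker hx)

def g : Lquot →ₗ⁅ℚ⁆ UU :=
  { (relIdeal : Submodule ℚ FL).liftQ (f : FL →ₗ[ℚ] UU) hker' with
    map_lie' := by
      intro x y
      induction x using Quotient.inductionOn' with
      | h x =>
      induction y using Quotient.inductionOn' with
      | h y =>
        show (Submodule.liftQ _ _ _) (Submodule.Quotient.mk ⁅x, y⁆) =
          ⁅(Submodule.liftQ _ _ _) (Submodule.Quotient.mk x),
           (Submodule.liftQ _ _ _) (Submodule.Quotient.mk y)⁆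
        simp only [Submodule.liftQ_apply, LieHom.coe_toLinearMap, LieHom.map_lie] }

lemma g_mk (x : FL) : g (mkL x) = f x := by
  show (Submodule.liftQ _ _ _) (Submodule.Quotient.mk x) = f x
  rfl

/-- endomorphisms in UU killing the M-part -/
def PP : LieIdeal ℚ UU where
  carrier := {T | ∀ m : Mo, (T : Module.End ℚ V) ((m, 0) : V) = 0}
  add_mem' := fun {T} {S} hT hS m => by simp [hT m, hS m]
  zero_mem' := fun m => rfl
  smul_mem' := fun c T hT m => by
    show (c • (T : Module.End ℚ V)) ((m, 0) : V) = 0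
    rw [LinearMap.smul_apply, hT m, smul_zero]
  lie_mem := fun {x} {T} hT m => by
    have hx : ∀ w : V, ((x : Module.End ℚ V) w).2 = 0 := x.2
    have h1 : (x : Module.End ℚ V) ((m, 0) : V) =
        ((((x : Module.End ℚ V) ((m, 0) : V)).1, 0) : V) := by
      exact Prod.ext rfl (hx _)
    show ((⁅x, T⁆ : UU) : Module.End ℚ V) ((m, 0) : V) = 0
    rw [LieSubalgebra.coe_bracket, Ring.lie_def, LinearMap.sub_apply,
      Module.End.mul_apply, Module.End.mul_apply, hT m, map_zero, h1, hT _]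
    exact sub_self 0

lemma PP_abelian {T S : UU} (hT : T ∈ PP) (hS : S ∈ PP) : ⁅T, S⁆ = 0 := by
  rw [← SetLike.coe_eq_coe, LieSubalgebra.coe_bracket, ZeroMemClass.coe_zero, Ring.lie_def]
  refine LinearMap.ext fun v => ?_
  have hTu : ∀ w : V, ((T : Module.End ℚ V) w).2 = 0 := T.2
  have hSu : ∀ w : V, ((S : Module.End ℚ V) w).2 = 0 := S.2
  have h1 : (S : Module.End ℚ V) v = ((((S : Module.End ℚ V) v).1, 0) : V) :=
    Prod.ext rfl (hSu v)
  have h2 : (T : Module.End ℚ V) v = ((((T : Module.End ℚ V) v).1, 0) : V) :=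
    Prod.ext rfl (hTu v)
  rw [LinearMap.sub_apply, Module.End.mul_apply, Module.End.mul_apply, h1, h2, hT _, hS _]
  exact sub_self 0

lemma fA_mem_PP_e11 : fA .e11 ∈ PP := fun m => scOp_apply_zero _ _
lemma fA_mem_PP_e22 : fA .e22 ∈ PP := fun m => scOp_apply_zero _ _
lemma fA_mem_PP_e12 : fA .e12 ∈ PP := fun m => scOp_apply_zero _ _

lemma NIdeal_le : NIdeal ≤ LieIdeal.comap g PP := by
  rw [NIdeal, LieSubmodule.lieSpan_le]
  intro x hx
  simp only [Set.mem_insert_iff, Set.mem_singleton_iff] at hx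
  rw [SetLike.mem_coe, LieIdeal.mem_comap]
  rcases hx with rfl|rfl|rfl <;> rw [g_mk, f_gen]
  · exact fA_mem_PP_e11
  · exact fA_mem_PP_e22
  · exact fA_mem_PP_e12

lemma NN_le_ker : NN ≤ g.ker := by
  rw [NN, LieSubmodule.lie_le_iff]
  intro x hx m hm
  rw [LieHom.mem_ker, LieHom.map_lie]
  exact PP_abelian (LieIdeal.mem_comap.mp (NIdeal_le hx)) (LieIdeal.mem_comap.mp (NIdeal_le hm))

lemma lieHom_ad_pow {L₁ L₂ : Type} [LieRing L₁] [LieAlgebra ℚ L₁] [LieRing L₂] [LieAlgebra ℚ L₂]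
    (φ : L₁ →ₗ⁅ℚ⁆ L₂) (x y : L₁) (n : ℕ) :
    φ ((LieAlgebra.ad ℚ L₁ x ^ n) y) = (LieAlgebra.ad ℚ L₂ (φ x) ^ n) (φ y) := by
  induction n with
  | zero => simp
  | succ n ih =>
    rw [pow_succ', pow_succ', Module.End.mul_apply, Module.End.mul_apply, LieAlgebra.ad_apply,
      LieAlgebra.ad_apply, LieHom.map_lie, ih]

def quotLieHom {L : Type} [LieRing L] [LieAlgebra ℚ L] (I : LieIdeal ℚ L) : L →ₗ⁅ℚ⁆ L ⧸ I :=
  { (I : Submodule ℚ L).mkQ with map_lie' := rfl }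

def plHom : FL →ₗ⁅ℚ⁆ LPL := (quotLieHom NN).comp (quotLieHom relIdeal)

lemma plHom_eq (x : FL) : plHom x = pl x := rfl

lemma ad_pow_e1_e11 (n : ℕ) :
    (LieAlgebra.ad ℚ (Module.End ℚ V) (mulOp X 0 X) ^ n) (scOp (1, 0, 0)) = scOp (X ^ n, 0, 0) := by
  induction n with
  | zero => simp
  | succ n ih =>
    rw [pow_succ', Module.End.mul_apply, ih, LieAlgebra.ad_apply, lie_mulOp_scOp]
    simp [pow_succ']

lemma ad_pow_e2_e22 (n : ℕ) :
    (LieAlgebra.ad ℚ (Module.End ℚ V) (mulOp 0 X X) ^ n) (scOp (0, 1, 0)) = scOp (0, X ^ n, 0) := by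
  induction n with
  | zero => simp
  | succ n ih =>
    rw [pow_succ', Module.End.mul_apply, ih, LieAlgebra.ad_apply, lie_mulOp_scOp]
    simp [pow_succ']

lemma ad_pow_e1_e12 (n : ℕ) :
    (LieAlgebra.ad ℚ (Module.End ℚ V) (mulOp X 0 X) ^ n) (scOp (0, 0, 1)) = scOp (0, 0, X ^ n) := by
  induction n with
  | zero => simp
  | succ n ih =>
    rw [pow_succ', Module.End.mul_apply, ih, LieAlgebra.ad_apply, lie_mulOp_scOp]
    simp [pow_succ']

end

theorem stmt9 (n : ℕ) (a b c : ℚ)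
    (h : a • (adPL E1 ^ n) E11 + b • (adPL E2 ^ n) E22 + c • (adPL E1 ^ n) E12 = 0) :
    a = 0 ∧ b = 0 ∧ c = 0 := by
  set w : FL := a • ((LieAlgebra.ad ℚ FL (gen .e1) ^ n) (gen .e11))
      + b • ((LieAlgebra.ad ℚ FL (gen .e2) ^ n) (gen .e22))
      + c • ((LieAlgebra.ad ℚ FL (gen .e1) ^ n) (gen .e12)) with hw
  have hplw : plHom w = 0 := by
    rw [hw, map_add, map_add, map_smul, map_smul, map_smul,
      lieHom_ad_pow, lieHom_ad_pow, lieHom_ad_pow]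
    exact h
  have hmem : mkL w ∈ NN := by
    have h0 : (LieSubmodule.Quotient.mk (N := NN) (mkL w) : LPL) = 0 := hplw
    exact (Submodule.Quotient.mk_eq_zero (NN : Submodule ℚ Lquot)).mp h0
  have hg : g (mkL w) = 0 := LieHom.mem_ker.mp (NN_le_ker hmem)
  have hfw : f w = 0 := by rw [← g_mk]; exact hg
  have hend : a • ((LieAlgebra.ad ℚ (Module.End ℚ V) (mulOp Polynomial.X 0 Polynomial.X) ^ n) (scOp (1, 0, 0)))
      + b • ((LieAlgebra.ad ℚ (Module.End ℚ V) (mulOp 0 Polynomial.X Polynomial.X) ^ n) (scOp (0, 1, 0)))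
      + c • ((LieAlgebra.ad ℚ (Module.End ℚ V) (mulOp Polynomial.X 0 Polynomial.X) ^ n) (scOp (0, 0, 1))) = 0 := by
    have h2 := congrArg UU.incl hfw
    simp only [hw, map_add, map_smul, lieHom_ad_pow, f_gen,
      map_zero] at h2
    simpa [fA, LieSubalgebra.coe_incl] using h2
  rw [ad_pow_e1_e11, ad_pow_e2_e22, ad_pow_e1_e12] at hend
  have hev := congrArg (fun T : Module.End ℚ V => T (((0 : Mo), (1 : ℚ)) : V)) hend
  simp only [LinearMap.add_apply, LinearMap.smul_apply, LinearMap.zero_apply, scOp,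
    LinearMap.coe_mk, AddHom.coe_mk, one_smul, Prod.ext_iff, Prod.smul_mk, smul_zero,
    Prod.mk_add_mk, add_zero, zero_add, Prod.fst_zero, Prod.snd_zero,
    Prod.mk_eq_zero] at hev
  obtain ⟨⟨h1, h2, h3⟩, -⟩ := hev
  have hX : (Polynomial.X : Polynomial ℚ) ^ n ≠ 0 := pow_ne_zero n Polynomial.X_ne_zero
  refine ⟨?_, ?_, ?_⟩
  · rcases smul_eq_zero.mp h1 with h | h
    · exact h
    · exact absurd h hX
  · rcases smul_eq_zero.mp h2 with h | h
    · exact h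
    · exact absurd h hX
  · rcases smul_eq_zero.mp h3 with h | h
    · exact h
    · exact absurd h hX
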